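/- arXiv:2407.06368 — 8 statements merged into one kernel-verified Lean document; each statement's English description precedes it below -/
import Mathlib

section
/- In A = ℝ[x]/(x^n), if α lies in the ideal (x) (i.e., α has zero constant term), then for the elements v_i = E·α^{i-1} one has v_i = 0 for all i > n. Moreover, if additionally E is invertible and the coefficient of x in α is nonzero, then v_1, …, v_n form an ℝ-linear basis of A. -/
open Polynomial

lemma coeff_sum_fin (n : ℕ) (f : Fin n → ℝ) (j : Fin n) :
    (∑ i : Fin n, C (f i) * X ^ (i : ℕ)).coeff (j : ℕ) = f j := by
  rw [finset_sum_coeff, Finset.sum_eq_single j]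
  · simp
  · intro b _ hb
    have : (j : ℕ) ≠ (b : ℕ) := fun h => hb (Fin.ext h.symm)
    simp [coeff_X_pow, this]
  · simp

/-- In `A = ℝ[x]/(x^n)`: if `α` has zero constant term then `v_i = E·α^{i-1}` vanishes
for `i > n`; if moreover `E` is invertible (`E_1 ≠ 0`) and the coefficient of `x` in `α`
is nonzero, then `v_1, …, v_n` form an ℝ-linear basis of `A`. -/
theorem stmt2 (n : ℕ) (hn : 2 ≤ n) (Ec a : Fin n → ℝ)
    (ha1 : a ⟨0, by omega⟩ = 0) :
    let mk := Ideal.Quotient.mk (Ideal.span {(X : ℝ[X]) ^ n})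
    let E := mk (∑ i : Fin n, C (Ec i) * X ^ (i : ℕ))
    let α := mk (∑ i : Fin n, C (a i) * X ^ (i : ℕ))
    (∀ i : ℕ, n < i → E * α ^ (i - 1) = 0) ∧
    (Ec ⟨0, by omega⟩ ≠ 0 → a ⟨1, hn⟩ ≠ 0 →
      ∃ b : Module.Basis (Fin n) ℝ (ℝ[X] ⧸ Ideal.span {(X : ℝ[X]) ^ n}),
        ∀ i : Fin n, b i = E * α ^ (i : ℕ)) := by
  classical
  intro mk E α
  set P : ℝ[X] := ∑ i : Fin n, C (a i) * X ^ (i : ℕ) with hPdef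
  set Pe : ℝ[X] := ∑ i : Fin n, C (Ec i) * X ^ (i : ℕ) with hPedef
  have hP0 : P.coeff 0 = 0 := by
    have h := coeff_sum_fin n a ⟨0, by omega⟩
    rw [← hPdef] at h
    rw [show (0 : ℕ) = ((⟨0, by omega⟩ : Fin n) : ℕ) from rfl, h, ha1]
  have hP1 : P.coeff 1 = a ⟨1, hn⟩ := by
    have h := coeff_sum_fin n a ⟨1, hn⟩
    rw [← hPdef] at h
    exact h
  have hPe0 : Pe.coeff 0 = Ec ⟨0, by omega⟩ := by
    have h := coeff_sum_fin n Ec ⟨0, by omega⟩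
    rw [← hPedef] at h
    exact h
  have hXdvdP : X ∣ P := X_dvd_iff.2 hP0
  have hPpow_low : ∀ (i j : ℕ), j < i → (P ^ i).coeff j = 0 := fun i j h =>
    X_pow_dvd_iff.1 (pow_dvd_pow_of_dvd hXdvdP i) j h
  obtain ⟨Q, hQ⟩ := hXdvdP
  have hQ0 : Q.coeff 0 = a ⟨1, hn⟩ := by
    rw [← hP1, hQ]
    exact (coeff_X_mul Q 0).symm
  have hPpow_diag : ∀ k : ℕ, (P ^ k).coeff k = (a ⟨1, hn⟩) ^ k := by
    intro k
    rw [hQ, mul_pow]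
    have h := coeff_X_pow_mul (Q ^ k) k 0
    rw [zero_add] at h
    rw [h, coeff_zero_eq_eval_zero, eval_pow, ← coeff_zero_eq_eval_zero, hQ0]
  constructor
  · intro i hi
    have hα : α ^ (i - 1) = 0 := by
      show mk (P ^ (i - 1)) = 0
      rw [Ideal.Quotient.eq_zero_iff_mem, Ideal.mem_span_singleton]
      exact dvd_trans (pow_dvd_pow X (by omega))
        (pow_dvd_pow_of_dvd ⟨Q, hQ⟩ (i - 1))
    show E * mk (P ^ (i-1)) = 0
    rw [show mk (P ^ (i-1)) = α ^ (i-1) from (map_pow mk P (i-1)), hα, mul_zero]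
  · intro hE0 ha2
    haveI : Nonempty (Fin n) := ⟨⟨0, by omega⟩⟩
    have li : LinearIndependent ℝ (fun i : Fin n => E * α ^ (i : ℕ)) := by
      rw [Fintype.linearIndependent_iff]
      intro c hc
      by_contra hcon
      push_neg at hcon
      obtain ⟨i0, hi0⟩ := hcon
      have hex : ∃ m : ℕ, ∃ h : m < n, c ⟨m, h⟩ ≠ 0 := ⟨i0, i0.isLt, by simpa using hi0⟩
      set k := Nat.find hex with hkdef
      obtain ⟨hk_lt, hk_ne⟩ := Nat.find_spec hex
      have hmin : ∀ m, m < k → ∀ h : m < n, c ⟨m, h⟩ = 0 := by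
        intro m hm h
        have := Nat.find_min hex hm
        push_neg at this
        exact this h
      set g : ℝ[X] := ∑ i : Fin n, C (c i) * P ^ (i : ℕ) with hgdef
      have hterm : ∀ i : Fin n, c i • (E * α ^ (i : ℕ))
          = mk (Pe * (C (c i) * P ^ (i : ℕ))) := by
        intro i
        show c i • (mk Pe * mk P ^ (i : ℕ)) = _
        rw [map_mul, map_mul, map_pow, show c i • (mk Pe * mk P ^ (i : ℕ)) = algebraMap ℝ (ℝ[X] ⧸ Ideal.span {(X : ℝ[X]) ^ n}) (c i) * (mk Pe * mk P ^ (i : ℕ)) from (algebra_compatible_smul (ℝ[X] ⧸ Ideal.span {(X : ℝ[X]) ^ n}) (c i) _).trans (smul_eq_mul _ _)]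
        have halg : algebraMap ℝ (ℝ[X] ⧸ Ideal.span {(X : ℝ[X]) ^ n}) (c i)
            = mk (C (c i)) := rfl
        rw [halg]
        ring
      have hmkg : mk (Pe * g) = 0 := by
        calc mk (Pe * g) = mk (∑ i : Fin n, Pe * (C (c i) * P ^ (i : ℕ))) := by
              rw [hgdef, Finset.mul_sum]
          _ = ∑ i : Fin n, mk (Pe * (C (c i) * P ^ (i : ℕ))) := map_sum mk _ _
          _ = ∑ i : Fin n, c i • (E * α ^ (i : ℕ)) :=
              Finset.sum_congr rfl fun i _ => (hterm i).symm
          _ = 0 := hc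
      have hdvd : (X : ℝ[X]) ^ n ∣ Pe * g :=
        Ideal.mem_span_singleton.1 (Ideal.Quotient.eq_zero_iff_mem.1 hmkg)
      have hglow : ∀ j, j < k → g.coeff j = 0 := by
        intro j hj
        rw [hgdef, finset_sum_coeff]
        refine Finset.sum_eq_zero fun i _ => ?_
        rw [coeff_C_mul]
        rcases lt_or_ge j (i : ℕ) with h | h
        · rw [hPpow_low _ _ h, mul_zero]
        · have hci : c i = 0 := by
            have := hmin (i : ℕ) (lt_of_le_of_lt h hj) i.isLt
            simpa using this
          rw [hci, zero_mul]
      have hgk : g.coeff k = c ⟨k, hk_lt⟩ * (a ⟨1, hn⟩) ^ k := by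
        rw [hgdef, finset_sum_coeff, Finset.sum_eq_single (⟨k, hk_lt⟩ : Fin n)]
        · rw [coeff_C_mul, hPpow_diag]
        · intro b _ hb
          rw [coeff_C_mul]
          have hbk : (b : ℕ) ≠ k := fun h => hb (Fin.ext h)
          rcases lt_or_gt_of_ne hbk with h | h
          · have hcb : c b = 0 := by
              have := hmin (b : ℕ) h b.isLt
              simpa using this
            rw [hcb, zero_mul]
          · rw [hPpow_low _ _ h, mul_zero]
        · simp
      have hco : (Pe * g).coeff k
          = Ec ⟨0, by omega⟩ * (c ⟨k, hk_lt⟩ * (a ⟨1, hn⟩) ^ k) := by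
        rw [coeff_mul, Finset.sum_eq_single ((0 : ℕ), k)]
        · rw [hgk, hPe0]
        · rintro ⟨m1, m2⟩ hmem hne
          have hm : m1 + m2 = k := Finset.HasAntidiagonal.mem_antidiagonal.1 hmem
          have hm2 : m2 < k := by
            rcases Nat.eq_zero_or_pos m1 with h0 | h0
            · subst h0
              rw [zero_add] at hm
              subst hm
              exact absurd rfl hne
            · omega
          rw [hglow m2 hm2, mul_zero]
        · intro h
          exact absurd (Finset.HasAntidiagonal.mem_antidiagonal.2 (zero_add k)) h
      have hzero : (Pe * g).coeff k = 0 := X_pow_dvd_iff.1 hdvd k hk_lt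
      rw [hco] at hzero
      have := mul_eq_zero.1 hzero
      rcases this with h | h
      · exact hE0 h
      · rcases mul_eq_zero.1 h with h' | h'
        · exact hk_ne h'
        · exact absurd h' (pow_ne_zero _ ha2)
    have hfr : Module.finrank ℝ (ℝ[X] ⧸ Ideal.span {(X : ℝ[X]) ^ n}) = n := by
      have h := (AdjoinRoot.powerBasis (f := (X : ℝ[X]) ^ n)
        (pow_ne_zero _ X_ne_zero)).finrank
      rw [show Module.finrank ℝ (ℝ[X] ⧸ Ideal.span {(X : ℝ[X]) ^ n})
        = Module.finrank ℝ (AdjoinRoot ((X : ℝ[X]) ^ n)) from rfl, h]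
      show ((X : ℝ[X]) ^ n).natDegree = n
      simp
    refine ⟨basisOfLinearIndependentOfCardEqFinrank li (by simp [hfr]), fun i => ?_⟩
    rw [coe_basisOfLinearIndependentOfCardEqFinrank]
end

section
/- Let U ⊆ ℝ^n be open and let ℰ = (ℰ^1, …, ℰ^n) : U → ℝ^n be smooth functions satisfying: for all i, j, k in {1,…,n} (with the convention ℰ^m = 0 for m ∉ {1,…,n}), −∂_{j+k−1}ℰ^i + ∂_j ℰ^{i−k+1} + ∂_k ℰ^{i−j+1} = ∂_1 ℰ^{i−j−k+2}, where the left-hand derivative ∂_{j+k-1} is taken to be 0 if j+k−1 > n. Then ∂_l ℰ^m = 0 for all l > m. -/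
/-- Partial derivative in the `l`-th coordinate direction (`l ∈ {1,…,n}` as an integer;
for `l` out of range the direction vector is `0`, so the derivative is `0`). -/
noncomputable def pd (n : ℕ) (l : ℤ) (f : (Fin n → ℝ) → ℝ) (u : Fin n → ℝ) : ℝ :=
  fderiv ℝ f u (fun j => if ((j : ℕ) : ℤ) + 1 = l then 1 else 0)

/-- If smooth functions `ℰ^1, …, ℰ^n` on an open `U ⊆ ℝ^n` satisfy the eventual identity
system `−∂_{j+k−1}ℰ^i + ∂_j ℰ^{i−k+1} + ∂_k ℰ^{i−j+1} = ∂_1 ℰ^{i−j−k+2}` for all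
`i,j,k ∈ {1,…,n}` (with `ℰ^m = 0` for `m ∉ {1,…,n}` and `∂_p = 0` for `p ∉ {1,…,n}`),
then `∂_l ℰ^m = 0` for all `l > m`. -/
theorem stmt3 (n : ℕ) (U : Set (Fin n → ℝ)) (hU : IsOpen U)
    (E : ℤ → (Fin n → ℝ) → ℝ)
    (hsupp : ∀ m : ℤ, (m < 1 ∨ (n : ℤ) < m) → E m = 0)
    (hsmooth : ∀ m : ℤ, ContDiffOn ℝ (⊤ : ℕ∞) (E m) U)
    (hsys : ∀ i j k : ℤ, 1 ≤ i → i ≤ (n : ℤ) → 1 ≤ j → j ≤ (n : ℤ) →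
      1 ≤ k → k ≤ (n : ℤ) → ∀ u ∈ U,
      -pd n (j + k - 1) (E i) u + pd n j (E (i - k + 1)) u + pd n k (E (i - j + 1)) u
        = pd n 1 (E (i - j - k + 2)) u) :
    ∀ l m : ℤ, 1 ≤ m → m ≤ (n : ℤ) → m < l → ∀ u ∈ U, pd n l (E m) u = 0 := by
  -- `pd` of an out-of-range `E` index is zero
  have hEzero : ∀ (p q : ℤ) (v : Fin n → ℝ), (q < 1 ∨ (n : ℤ) < q) → pd n p (E q) v = 0 := by
    intro p q v hq
    rw [hsupp q hq]
    unfold pd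
    have : (0 : (Fin n → ℝ) → ℝ) = fun _ => (0 : ℝ) := rfl
    rw [this, fderiv_fun_const]
    simp
  -- `pd` with out-of-range derivative index is zero
  have hoob : ∀ (p : ℤ) (f : (Fin n → ℝ) → ℝ) (v : Fin n → ℝ), ((n : ℤ) < p) →
      pd n p f v = 0 := by
    intro p f v hp
    unfold pd
    have hvec : (fun j : Fin n => if ((j : ℕ) : ℤ) + 1 = p then (1:ℝ) else 0) = 0 := by
      funext j
      rw [if_neg]
      · rfl
      · have := j.isLt; omega
    rw [hvec, map_zero]
  -- key relation from the system with (i,j,k) = (m, d+1, m)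
  have hrel : ∀ md : ℤ, 1 ≤ md → md ≤ (n : ℤ) → ∀ d : ℤ, 1 ≤ d → d + 1 ≤ (n : ℤ) →
      ∀ v ∈ U, pd n (md + d) (E md) v
        = pd n (d + 1) (E 1) v + pd n md (E (md - d)) v := by
    intro md h1 h2 d hd1 hd2 v hv
    have h := hsys md (d + 1) md h1 h2 (by omega) (by omega) h1 h2 v hv
    have e1 : d + 1 + md - 1 = md + d := by ring
    have e2 : md - md + 1 = (1 : ℤ) := by ring
    have e3 : md - (d + 1) + 1 = md - d := by ring
    have e4 : md - (d + 1) - md + 2 = 1 - d := by ring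
    rw [e1, e2, e3, e4] at h
    have h0 : pd n 1 (E (1 - d)) v = 0 := hEzero _ _ _ (Or.inl (by omega))
    rw [h0] at h
    linarith
  -- the "gap d, level 1" derivative vanishes
  have hb1 : ∀ d : ℤ, 1 ≤ d → d + 1 ≤ (n : ℤ) → ∀ v ∈ U, pd n (d + 1) (E 1) v = 0 := by
    intro d hd1 hd2 v hv
    have key : ∀ t : ℕ, pd n ((n : ℤ) - t * d + d) (E ((n : ℤ) - t * d)) v
        = -(t : ℝ) * pd n (d + 1) (E 1) v ∨ pd n (d + 1) (E 1) v = 0 := by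
      intro t
      induction t with
      | zero =>
        left
        have : (n : ℤ) < (n : ℤ) - (0 : ℕ) * d + d := by simp; omega
        rw [hoob _ _ _ this]
        simp
      | succ t ih =>
        rcases ih with ih | ih
        · have htd : (0 : ℤ) ≤ (t : ℤ) * d := mul_nonneg (by positivity) (by omega)
          by_cases hpos : 1 ≤ (n : ℤ) - t * d
          · have h2 : (n : ℤ) - t * d ≤ n := by omega
            have hr := hrel ((n : ℤ) - t * d) hpos h2 d hd1 hd2 v hv
            left
            have c1 : ((t + 1 : ℕ) : ℤ) = (t : ℤ) + 1 := by push_cast; ring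
            rw [c1]
            have e1 : (n : ℤ) - ((t : ℤ) + 1) * d + d = (n : ℤ) - t * d := by ring
            have e2 : (n : ℤ) - ((t : ℤ) + 1) * d = (n : ℤ) - t * d - d := by ring
            rw [e1, e2]
            push_cast
            linarith
          · right
            have hz : pd n ((n : ℤ) - t * d + d) (E ((n : ℤ) - t * d)) v = 0 :=
              hEzero _ _ _ (Or.inl (by omega))
            rw [hz] at ih
            have ht1 : 1 ≤ t := by
              by_contra h
              have : t = 0 := by omega
              subst this
              simp at hpos
              omega
            have htR : (t : ℝ) ≠ 0 := by
              have h' : t ≠ 0 := by omega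
              exact_mod_cast h'
            rcases mul_eq_zero.mp (by linarith : (t : ℝ) * pd n (d + 1) (E 1) v = 0) with h | h
            · exact absurd h htR
            · exact h
        · right; exact ih
    rcases key n with h | h
    · have hnd : (0 : ℤ) ≤ (n : ℤ) * (d - 1) := mul_nonneg (by positivity) (by omega)
      have hlt : (n : ℤ) - n * d < 1 := by nlinarith
      have hz : pd n ((n : ℤ) - n * d + d) (E ((n : ℤ) - n * d)) v = 0 :=
        hEzero _ _ _ (Or.inl hlt)
      rw [hz] at h
      have hnR : (n : ℝ) ≠ 0 := by
        have : (2 : ℤ) ≤ n := by omega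
        have : (2 : ℝ) ≤ (n : ℝ) := by exact_mod_cast this
        linarith
      rcases mul_eq_zero.mp (by linarith : (n : ℝ) * pd n (d + 1) (E 1) v = 0) with h' | h'
      · exact absurd h' hnR
      · exact h'
    · exact h
  -- descent on m
  have main : ∀ N : ℕ, ∀ md : ℤ, md ≤ (N : ℤ) → 1 ≤ md → ∀ d : ℤ, 1 ≤ d →
      md + d ≤ (n : ℤ) → ∀ v ∈ U, pd n (md + d) (E md) v = 0 := by
    intro N
    induction N with
    | zero => intro md h0 h1; exact absurd h0 (by omega)
    | succ N ih =>
      intro md h0 h1 d hd hdn v hv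
      have hd2 : d + 1 ≤ (n : ℤ) := by omega
      have hmn' : md ≤ (n : ℤ) := by omega
      rw [hrel md h1 hmn' d hd hd2 v hv, hb1 d hd hd2 v hv, zero_add]
      by_cases hc : 1 ≤ md - d
      · have hih := ih (md - d) (by omega) hc d hd (by omega) v hv
        have e : md - d + d = md := by ring
        rw [e] at hih
        exact hih
      · exact hEzero _ _ _ (Or.inl (by omega))
  intro l m hm1 hmn hml u hu
  by_cases hln : l ≤ (n : ℤ)
  · have h := main n m (by omega) hm1 (l - m) (by omega) (by omega) u hu
    have e : m + (l - m) = l := by ring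
    rw [e] at h
    exact h
  · exact hoob l _ u (by omega)
end

section
/- Under the same hypotheses (the eventual identity system for one Jordan block of size n), one has for all 2 ≤ l ≤ m ≤ n: ∂_l ℰ^m = (l−1) ∂_2 ℰ^{m−l+2} − (l−2) ∂_1 ℰ^{m−l+1}. In particular ∂_2 ℰ^1 = 0. -/
lemma pd_zero (n : ℕ) (l : ℤ) (u : Fin n → ℝ) : pd n l (0 : (Fin n → ℝ) → ℝ) u = 0 := by
  rw [pd, show (0 : (Fin n → ℝ) → ℝ) = fun _ => (0:ℝ) from rfl, fderiv_fun_const]; simp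

lemma pd_big (n : ℕ) (l : ℤ) (hl : (n : ℤ) < l) (f : (Fin n → ℝ) → ℝ) (u : Fin n → ℝ) :
    pd n l f u = 0 := by
  have h0 : (fun j : Fin n => if ((j : ℕ) : ℤ) + 1 = l then (1:ℝ) else 0) = 0 := by
    funext j
    have := j.isLt
    simp only [Pi.zero_apply, ite_eq_right_iff]
    intro h; omega
  rw [pd, h0, map_zero]

lemma key (n : ℕ) (U : Set (Fin n → ℝ))
    (E : ℤ → (Fin n → ℝ) → ℝ)
    (hsupp : ∀ m : ℤ, (m < 1 ∨ (n : ℤ) < m) → E m = 0)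
    (hsys : ∀ i j k : ℤ, 1 ≤ i → i ≤ (n : ℤ) → 1 ≤ j → j ≤ (n : ℤ) →
      1 ≤ k → k ≤ (n : ℤ) → ∀ u ∈ U,
      -pd n (j + k - 1) (E i) u + pd n j (E (i - k + 1)) u + pd n k (E (i - j + 1)) u
        = pd n 1 (E (i - j - k + 2)) u) :
    ∀ l : ℤ, 2 ≤ l → l ≤ (n : ℤ) + 1 → ∀ m : ℤ, m ≤ (n : ℤ) → ∀ u ∈ U,
      pd n l (E m) u = ((l : ℝ) - 1) * pd n 2 (E (m - l + 2)) u
        - ((l : ℝ) - 2) * pd n 1 (E (m - l + 1)) u := by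
  intro l hl
  refine Int.le_induction (motive := fun l _ => l ≤ (n : ℤ) + 1 → ∀ m : ℤ, m ≤ (n : ℤ) → ∀ u ∈ U,
      pd n l (E m) u = ((l : ℝ) - 1) * pd n 2 (E (m - l + 2)) u
        - ((l : ℝ) - 2) * pd n 1 (E (m - l + 1)) u) ?_ ?_ l hl
  ·
    intro _ m _ u _
    have h1 : m - 2 + 2 = m := by ring
    rw [h1]
    push_cast
    ring
  · intro l hl ih
    intro hln m hm u hu
    by_cases hm1 : m ≤ 0
    · rw [hsupp m (Or.inl (by omega)), hsupp (m - (l+1) + 2) (Or.inl (by omega)),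
        hsupp (m - (l+1) + 1) (Or.inl (by omega)), pd_zero, pd_zero, pd_zero]
      ring
    · have hsys' := hsys m 2 l (by omega) hm (by omega) (by omega) (by omega) (by omega) u hu
      have e1 : (2:ℤ) + l - 1 = l + 1 := by ring
      have e2 : m - 2 + 1 = m - 1 := by ring
      have e3 : m - 2 - l + 2 = m - l := by ring
      rw [e1, e2, e3] at hsys'
      have ihp := ih (by omega) (m - 1) (by omega) u hu
      have e4 : m - 1 - l + 2 = m - l + 1 := by ring
      have e5 : m - 1 - l + 1 = m - l := by ring
      rw [e4, e5] at ihp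
      have e6 : m - (l+1) + 2 = m - l + 1 := by ring
      have e7 : m - (l+1) + 1 = m - l := by ring
      rw [e6, e7]
      push_cast
      linear_combination -hsys' + ihp

/-- Under the eventual identity system for one Jordan block of size `n`, for all
`2 ≤ l ≤ m ≤ n` one has `∂_l ℰ^m = (l−1)∂_2 ℰ^{m−l+2} − (l−2)∂_1 ℰ^{m−l+1}`;
in particular `∂_2 ℰ^1 = 0`. -/
theorem stmt4 (n : ℕ) (U : Set (Fin n → ℝ)) (hU : IsOpen U)
    (E : ℤ → (Fin n → ℝ) → ℝ)
    (hsupp : ∀ m : ℤ, (m < 1 ∨ (n : ℤ) < m) → E m = 0)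
    (hsmooth : ∀ m : ℤ, ContDiffOn ℝ (⊤ : ℕ∞) (E m) U)
    (hsys : ∀ i j k : ℤ, 1 ≤ i → i ≤ (n : ℤ) → 1 ≤ j → j ≤ (n : ℤ) →
      1 ≤ k → k ≤ (n : ℤ) → ∀ u ∈ U,
      -pd n (j + k - 1) (E i) u + pd n j (E (i - k + 1)) u + pd n k (E (i - j + 1)) u
        = pd n 1 (E (i - j - k + 2)) u) :
    (∀ l m : ℤ, 2 ≤ l → l ≤ m → m ≤ (n : ℤ) → ∀ u ∈ U,
      pd n l (E m) u = ((l : ℝ) - 1) * pd n 2 (E (m - l + 2)) u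
        - ((l : ℝ) - 2) * pd n 1 (E (m - l + 1)) u) ∧
    (∀ u ∈ U, pd n 2 (E 1) u = 0) := by
  constructor
  · intro l m hl hlm hmn u hu
    exact key n U E hsupp hsys l hl (by omega) m hmn u hu
  · intro u hu
    by_cases hn : 2 ≤ (n : ℤ)
    · have h := key n U E hsupp hsys ((n : ℤ) + 1) (by omega) (by omega) n le_rfl u hu
      rw [pd_big n ((n : ℤ) + 1) (by omega)] at h
      have e : (n : ℤ) - ((n : ℤ) + 1) + 2 = 1 := by ring
      have e' : (n : ℤ) - ((n : ℤ) + 1) + 1 = 0 := by ring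
      rw [e, e', hsupp 0 (Or.inl (by norm_num)), pd_zero] at h
      push_cast at h
      have hn0 : (0 : ℝ) < (n : ℝ) := by exact_mod_cast (by omega : (0:ℤ) < (n:ℤ))
      have hx : ((n : ℝ) + 1 - 1) * pd n 2 (E 1) u = 0 := by linarith
      have hne : ((n : ℝ) + 1 - 1) ≠ 0 := by intro hc; linarith
      exact (mul_eq_zero.mp hx).resolve_left hne
    · exact pd_big n 2 (by omega) (E 1) u
end

section
/- Conversely, if smooth functions ℰ^1, …, ℰ^n on an open set U ⊆ ℝ^n satisfy ∂_l ℰ^m = (l−1)∂_2 ℰ^{m−l+2} − (l−2)∂_1 ℰ^{m−l+1} for l ≤ m and ∂_l ℰ^m = 0 for l > m (for all m = 1,…,n), then they satisfy the full eventual identity system −∂_{j+k−1}ℰ^i + ∂_j ℰ^{i−k+1} + ∂_k ℰ^{i−j+1} = ∂_1 ℰ^{i−j−k+2} for all i,j,k ∈ {1,…,n}. -/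
/-- Converse: if smooth `ℰ^1, …, ℰ^n` on an open `U ⊆ ℝ^n` satisfy
`∂_l ℰ^m = (l−1)∂_2 ℰ^{m−l+2} − (l−2)∂_1 ℰ^{m−l+1}` for `l ≤ m` and `∂_l ℰ^m = 0` for
`l > m`, then they satisfy the full eventual identity system
`−∂_{j+k−1}ℰ^i + ∂_j ℰ^{i−k+1} + ∂_k ℰ^{i−j+1} = ∂_1 ℰ^{i−j−k+2}` for all
`i,j,k ∈ {1,…,n}`. -/
theorem stmt5 (n : ℕ) (U : Set (Fin n → ℝ)) (hU : IsOpen U)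
    (E : ℤ → (Fin n → ℝ) → ℝ)
    (hsupp : ∀ m : ℤ, (m < 1 ∨ (n : ℤ) < m) → E m = 0)
    (hsmooth : ∀ m : ℤ, ContDiffOn ℝ (⊤ : ℕ∞) (E m) U)
    (hle : ∀ l m : ℤ, 1 ≤ l → l ≤ m → m ≤ (n : ℤ) → ∀ u ∈ U,
      pd n l (E m) u = ((l : ℝ) - 1) * pd n 2 (E (m - l + 2)) u
        - ((l : ℝ) - 2) * pd n 1 (E (m - l + 1)) u)
    (hgt : ∀ l m : ℤ, 1 ≤ m → m ≤ (n : ℤ) → m < l → ∀ u ∈ U, pd n l (E m) u = 0) :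
    ∀ i j k : ℤ, 1 ≤ i → i ≤ (n : ℤ) → 1 ≤ j → j ≤ (n : ℤ) →
      1 ≤ k → k ≤ (n : ℤ) → ∀ u ∈ U,
      -pd n (j + k - 1) (E i) u + pd n j (E (i - k + 1)) u + pd n k (E (i - j + 1)) u
        = pd n 1 (E (i - j - k + 2)) u := by
  -- pd of the zero function is zero
  have pdz : ∀ (l : ℤ) (u : Fin n → ℝ), pd n l (fun _ => (0 : ℝ)) u = 0 := by
    intro l u
    simp [pd]
  have pdE0 : ∀ (l m : ℤ), (m < 1 ∨ (n : ℤ) < m) → ∀ u : Fin n → ℝ,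
      pd n l (E m) u = 0 := by
    intro l m hm u
    rw [hsupp m hm]
    exact pdz l u
  -- master formula for all m ≤ n, l ≥ 1
  have master : ∀ l m : ℤ, 1 ≤ l → m ≤ (n : ℤ) → ∀ u ∈ U,
      pd n l (E m) u = ((l : ℝ) - 1) * pd n 2 (E (m - l + 2)) u
        - ((l : ℝ) - 2) * pd n 1 (E (m - l + 1)) u := by
    intro l m hl hm u hu
    rcases lt_or_ge m 1 with hm1 | hm1
    · -- m < 1 : everything vanishes
      have h0 : pd n l (E m) u = 0 := pdE0 l m (Or.inl hm1) u
      have h1 : pd n 1 (E (m - l + 1)) u = 0 :=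
        pdE0 1 (m - l + 1) (Or.inl (by omega)) u
      rcases eq_or_lt_of_le hl with hl1 | hl2
      · -- l = 1
        rw [h0, h1, ← hl1]
        norm_num
      · have h2 : pd n 2 (E (m - l + 2)) u = 0 :=
          pdE0 2 (m - l + 2) (Or.inl (by omega)) u
        rw [h0, h1, h2]; ring
    · rcases le_or_gt l m with hlm | hlm
      · exact hle l m hl hlm hm u hu
      · -- l > m, 1 ≤ m ≤ n
        have h0 : pd n l (E m) u = 0 := hgt l m hm1 hm hlm u hu
        have h1 : pd n 1 (E (m - l + 1)) u = 0 :=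
          pdE0 1 (m - l + 1) (Or.inl (by omega)) u
        rcases eq_or_lt_of_le (by omega : m + 1 ≤ l) with hml | hml
        · -- l = m + 1 : the pd₂ term is pd₂ E¹ = 0
          have h2 : pd n 2 (E 1) u = 0 :=
            hgt 2 1 le_rfl (le_trans hm1 hm) (by norm_num) u hu
          have e1 : m - l + 2 = 1 := by omega
          rw [h0, h1, e1, h2]; ring
        · have h2 : pd n 2 (E (m - l + 2)) u = 0 :=
            pdE0 2 (m - l + 2) (Or.inl (by omega)) u
          rw [h0, h1, h2]; ring
  intro i j k hi1 hin hj1 hjn hk1 hkn u hu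
  have h1 := master (j + k - 1) i (by omega) hin u hu
  have h2 := master j (i - k + 1) hj1 (by omega) u hu
  have h3 := master k (i - j + 1) hk1 (by omega) u hu
  have e1 : i - (j + k - 1) + 2 = i - j - k + 3 := by ring
  have e2 : i - (j + k - 1) + 1 = i - j - k + 2 := by ring
  have e3 : i - k + 1 - j + 2 = i - j - k + 3 := by ring
  have e4 : i - k + 1 - j + 1 = i - j - k + 2 := by ring
  have e5 : i - j + 1 - k + 2 = i - j - k + 3 := by ring
  have e6 : i - j + 1 - k + 1 = i - j - k + 2 := by ring
  rw [e1, e2] at h1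
  rw [e3, e4] at h2
  rw [e5, e6] at h3
  rw [h1, h2, h3]
  push_cast
  ring
end

section
/- Let M be a smooth manifold with a commutative associative smooth multiplication ∘ on vector fields with unit e, and suppose the endomorphism field L = α∘ (X ↦ α ∘ X) is a Nijenhuis operator for a vector field α. Then for all vector fields β₀, β₁ and all n, m ≥ 0, the brackets A_{n,m} = [β₀ ∘ α^n, β₁ ∘ α^m] satisfy A_{n+1,m+1} = α ∘ A_{n,m+1} + α ∘ A_{n+1,m} − α² ∘ A_{n,m}, and consequently A_{n,m} = α^n ∘ A_{0,m} + α^m ∘ A_{n,0} − α^{n+m} ∘ A_{0,0}. -/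
/-- Abstract formalization: `V` is the Lie algebra of vector fields, `mul` the
commutative associative multiplication `∘` with unit `e`.  If `L = α∘` is a Nijenhuis
operator, then the brackets `A n m = [β₀∘α^n, β₁∘α^m]` satisfy the stated recursion,
and consequently `A n m = α^n ∘ A 0 m + α^m ∘ A n 0 − α^{n+m} ∘ A 0 0`. -/
theorem stmt8 (V : Type*) [LieRing V]
    (mul : V → V → V) (e : V)
    (hcomm : ∀ X Y, mul X Y = mul Y X)
    (hassoc : ∀ X Y Z, mul (mul X Y) Z = mul X (mul Y Z))
    (hunit : ∀ X, mul e X = X)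
    (haddl : ∀ X Y Z, mul (X + Y) Z = mul X Z + mul Y Z)
    (α β₀ β₁ : V)
    (hN : ∀ X Y : V,
      ⁅mul α X, mul α Y⁆ - mul α ⁅X, mul α Y⁆ - mul α ⁅mul α X, Y⁆
        + mul α (mul α ⁅X, Y⁆) = 0)
    (apow : ℕ → V) (hpow0 : apow 0 = e) (hpowS : ∀ k, apow (k + 1) = mul α (apow k))
    (A : ℕ → ℕ → V) (hA : ∀ n m, A n m = ⁅mul β₀ (apow n), mul β₁ (apow m)⁆) :
    (∀ n m, A (n + 1) (m + 1)
      = mul α (A n (m + 1)) + mul α (A (n + 1) m) - mul α (mul α (A n m))) ∧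
    (∀ n m, A n m
      = mul (apow n) (A 0 m) + mul (apow m) (A n 0) - mul (apow (n + m)) (A 0 0)) := by
  letI : CommRing V :=
    { (inferInstance : AddCommGroup V) with
      mul := mul
      one := e
      mul_comm := hcomm
      mul_assoc := hassoc
      one_mul := hunit
      mul_one := fun X => by show mul X e = X; rw [hcomm]; exact hunit X
      left_distrib := fun a b c => by
        show mul a (b + c) = mul a b + mul a c
        rw [hcomm, haddl, hcomm b, hcomm c]
      right_distrib := haddl
      zero_mul := fun a => by
        show mul 0 a = 0
        have h := haddl 0 0 a
        simp only [add_zero] at h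
        exact left_eq_add.mp h
      mul_zero := fun a => by
        show mul a 0 = 0
        have h : mul (0 : V) a = 0 := by
          have h := haddl 0 0 a
          simp only [add_zero] at h
          exact left_eq_add.mp h
        rw [hcomm]; exact h }
  have hmul : ∀ X Y : V, mul X Y = X * Y := fun _ _ => rfl
  have hap : ∀ k, apow k = α ^ k := by
    intro k
    induction k with
    | zero => rw [hpow0]; rfl
    | succ k ih => rw [hpowS, ih, hmul, pow_succ, mul_comm]
  have key : ∀ X Y : V, ⁅mul α X, mul α Y⁆
      = mul α ⁅X, mul α Y⁆ + mul α ⁅mul α X, Y⁆ - mul α (mul α ⁅X, Y⁆) := by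
    intro X Y
    rw [← sub_eq_zero, ← hN X Y]
    abel
  have hrec : ∀ n m, A (n + 1) (m + 1)
      = mul α (A n (m + 1)) + mul α (A (n + 1) m) - mul α (mul α (A n m)) := by
    intro n m
    have hb0 : mul β₀ (apow (n + 1)) = mul α (mul β₀ (apow n)) := by
      rw [hpowS]
      simp only [hmul]
      ring
    have hb1 : mul β₁ (apow (m + 1)) = mul α (mul β₁ (apow m)) := by
      rw [hpowS]
      simp only [hmul]
      ring
    rw [hA, hA, hA, hA, hb0, hb1]
    exact key _ _
  refine ⟨hrec, ?_⟩
  intro n m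
  simp only [hmul, hap] at *
  induction n generalizing m with
  | zero =>
    simp only [pow_zero, one_mul, Nat.zero_add]
    ring
  | succ n ihn =>
    induction m with
    | zero =>
      simp only [pow_zero, one_mul, Nat.add_zero]
      ring
    | succ m ihm =>
      have h1 := hrec n m
      have h2 := ihn (m + 1)
      have h3 := ihn m
      linear_combination h1 + α * h2 + α * ihm - α ^ 2 * h3
end

section
/- Let (M, ∘, e) be an F-manifold and let β₀ be a vector field satisfying the weak eventual identity condition L_{β₀}(∘)(X,Y) = [e, β₀] ∘ X ∘ Y for all vector fields X, Y, and let α be a vector field with α∘ Nijenhuis. Then for all m ≥ 1: [β₀, α^m] = (m−1)[e, β₀] ∘ α^m + m [β₀, α] ∘ α^{m−1}. -/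
/-!
Writing `b = [e, β₀]`, the weak eventual identity condition says exactly that `ad β₀` is a
derivation of `∘` up to the correction term `b ∘ X ∘ Y`. Applying this twisted Leibniz rule to
`α^(m+1) = α ∘ α^m` and inducting on `m` gives the formula: each inductive step adds one copy
of `[β₀, α] ∘ α^m` and, through the correction term, one copy of `b ∘ α^(m+1)`.
-/

section TwistedLeibniz

variable {V : Type*} {mul : V → V → V}

theorem mul_left_comm_of_comm_assoc (hcomm : ∀ X Y, mul X Y = mul Y X)
    (hassoc : ∀ X Y Z, mul (mul X Y) Z = mul X (mul Y Z)) (X Y Z : V) :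
    mul X (mul Y Z) = mul Y (mul X Z) := by
  rw [← hassoc, hcomm X Y, hassoc]

theorem mul_add_of_comm_add_mul [Add V] (hcomm : ∀ X Y, mul X Y = mul Y X)
    (haddl : ∀ X Y Z, mul (X + Y) Z = mul X Z + mul Y Z) (X Y Z : V) :
    mul X (Y + Z) = mul X Y + mul X Z := by
  rw [hcomm, haddl, hcomm Y, hcomm Z]

theorem apply_pow_succ_of_twisted_leibniz [AddCommGroup V] (hcomm : ∀ X Y, mul X Y = mul Y X)
    (hassoc : ∀ X Y Z, mul (mul X Y) Z = mul X (mul Y Z))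
    (haddl : ∀ X Y Z, mul (X + Y) Z = mul X Z + mul Y Z)
    {e : V} (hunit : ∀ X, mul e X = X)
    {D : V → V} {b : V} (hD : ∀ X Y, D (mul X Y) = mul (D X) Y + mul X (D Y) + mul b (mul X Y))
    {α : V} {apow : ℕ → V} (hpow0 : apow 0 = e) (hpowS : ∀ k, apow (k + 1) = mul α (apow k))
    (m : ℕ) :
    D (apow (m + 1)) = m • mul b (apow (m + 1)) + (m + 1) • mul (D α) (apow m) := by
  have mul_nsmul (X : V) (n : ℕ) (Y : V) : mul X (n • Y) = n • mul X Y :=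
    (AddMonoidHom.mk' (mul X) (mul_add_of_comm_add_mul hcomm haddl X)).map_nsmul n Y
  have mul_pow (X : V) (k : ℕ) : mul α (mul X (apow k)) = mul X (apow (k + 1)) := by
    rw [mul_left_comm_of_comm_assoc hcomm hassoc, hpowS]
  induction m with
  | zero =>
    have hpow1 : apow 1 = α := by rw [hpowS, hpow0, hcomm, hunit]
    rw [hpow1, hpow0, hcomm (D α), hunit, zero_smul, zero_add, zero_add, one_smul]
  | succ k ih =>
    rw [hpowS (k + 1), hD, ih, mul_add_of_comm_add_mul hcomm haddl, mul_nsmul, mul_nsmul,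
      mul_pow, mul_pow, ← hpowS]
    simp only [add_smul, one_smul]
    abel

end TwistedLeibniz

theorem stmt9_general (V : Type*) [LieRing V]
    (mul : V → V → V) (e : V)
    (hcomm : ∀ X Y, mul X Y = mul Y X)
    (hassoc : ∀ X Y Z, mul (mul X Y) Z = mul X (mul Y Z))
    (hunit : ∀ X, mul e X = X)
    (haddl : ∀ X Y Z, mul (X + Y) Z = mul X Z + mul Y Z)
    (LD : V → V → V → V)
    (hLD : ∀ Z X Y, LD Z X Y = ⁅Z, mul X Y⁆ - mul ⁅Z, X⁆ Y - mul X ⁅Z, Y⁆)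
    (α β₀ : V)
    (hwEI : ∀ X Y, LD β₀ X Y = mul ⁅e, β₀⁆ (mul X Y))
    (apow : ℕ → V) (hpow0 : apow 0 = e) (hpowS : ∀ k, apow (k + 1) = mul α (apow k)) :
    ∀ m : ℕ, 1 ≤ m →
      ⁅β₀, apow m⁆ = (m - 1) • mul ⁅e, β₀⁆ (apow m) + m • mul ⁅β₀, α⁆ (apow (m - 1)) := by
  have twisted_leibniz (X Y : V) :
      ⁅β₀, mul X Y⁆ = mul ⁅β₀, X⁆ Y + mul X ⁅β₀, Y⁆ + mul ⁅e, β₀⁆ (mul X Y) := by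
    rw [← hwEI, hLD]
    abel
  intro m hm
  obtain ⟨k, rfl⟩ := Nat.exists_eq_add_of_le' hm
  simpa using apply_pow_succ_of_twisted_leibniz hcomm hassoc haddl hunit twisted_leibniz
    hpow0 hpowS k

/-- Abstract formalization on the Lie algebra `V` of vector fields with multiplication
`∘` (an F-manifold, i.e. Hertling–Manin condition): if `β₀` is a weak eventual identity
and `α∘` is Nijenhuis, then for `m ≥ 1`:
`[β₀, α^m] = (m−1)[e,β₀]∘α^m + m[β₀,α]∘α^{m−1}`. -/
theorem stmt9 (V : Type*) [LieRing V]
    (mul : V → V → V) (e : V)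
    (hcomm : ∀ X Y, mul X Y = mul Y X)
    (hassoc : ∀ X Y Z, mul (mul X Y) Z = mul X (mul Y Z))
    (hunit : ∀ X, mul e X = X)
    (haddl : ∀ X Y Z, mul (X + Y) Z = mul X Z + mul Y Z)
    (LD : V → V → V → V)
    (hLD : ∀ Z X Y, LD Z X Y = ⁅Z, mul X Y⁆ - mul ⁅Z, X⁆ Y - mul X ⁅Z, Y⁆)
    (hHM : ∀ X Y Z W, LD (mul X Y) Z W = mul X (LD Y Z W) + mul Y (LD X Z W))
    (α β₀ : V)
    (hwEI : ∀ X Y, LD β₀ X Y = mul ⁅e, β₀⁆ (mul X Y))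
    (hN : ∀ X Y : V,
      ⁅mul α X, mul α Y⁆ - mul α ⁅X, mul α Y⁆ - mul α ⁅mul α X, Y⁆
        + mul α (mul α ⁅X, Y⁆) = 0)
    (apow : ℕ → V) (hpow0 : apow 0 = e) (hpowS : ∀ k, apow (k + 1) = mul α (apow k)) :
    ∀ m : ℕ, 1 ≤ m →
      ⁅β₀, apow m⁆ = (m - 1) • mul ⁅e, β₀⁆ (apow m) + m • mul ⁅β₀, α⁆ (apow (m - 1)) :=
  stmt9_general V mul e hcomm hassoc hunit haddl LD hLD α β₀ hwEI apow hpow0 hpowS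
end

section
/- With the hypotheses of the previous statements (β₀, β₁ weak eventual identities, α a weak eventual identity on the F-manifold), one has [β₀ ∘ α^n, β₁ ∘ α^m] = α^{n+m−1} ∘ ( m [β₀, β₁ ∘ α] + n [β₀ ∘ α, β₁] ) − (n+m−1) α^{n+m} ∘ [β₀, β₁] for all n, m ≥ 0. -/
/-!
Write `c = [e, α]`. The Hertling–Manin condition makes `L_{α^k}(∘)(X, α) = k α^k ∘ c ∘ X` and
`[α, α^k] = (k - 1) c ∘ α^k`. Expanding `[β₀ ∘ α^n, (β₁ ∘ α^m) ∘ α]` with these, all terms in `c`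
cancel and one is left with the recurrence
`[β₀ ∘ α^n, β₁ ∘ α^(m+1)] = α ∘ [β₀ ∘ α^n, β₁ ∘ α^m] + α^(n+m) ∘ ([β₀, β₁ ∘ α] - [β₀, β₁] ∘ α)`,
and symmetrically in `n`. Induction on `n + m` gives the formula.
-/

def lieDerivMul {V : Type*} [Mul V] [LieRing V] (Z X Y : V) : V :=
  ⁅Z, X * Y⁆ - ⁅Z, X⁆ * Y - X * ⁅Z, Y⁆

/-- The vector fields of an F-manifold: `*` is `∘` and `1` is the unit field `e`. -/
class FManifoldAlgebra (V : Type*) extends CommRing V, LieRing V where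
  lieDerivMul_mul : ∀ X Y Z W : V,
    lieDerivMul (X * Y) Z W = X * lieDerivMul Y Z W + Y * lieDerivMul X Z W

namespace FManifoldAlgebra

variable {V : Type*} [FManifoldAlgebra V]

def IsWeakEventualIdentity (β : V) : Prop :=
  ∀ X Y : V, lieDerivMul β X Y = ⁅(1 : V), β⁆ * (X * Y)

theorem lie_mul (Z X Y : V) : ⁅Z, X * Y⁆ = lieDerivMul Z X Y + ⁅Z, X⁆ * Y + X * ⁅Z, Y⁆ := by
  rw [lieDerivMul]; abel

theorem lieDerivMul_one (X Y : V) : lieDerivMul 1 X Y = 0 := by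
  simpa using lieDerivMul_mul (1 : V) 1 X Y

theorem IsWeakEventualIdentity.lie_mul_right {γ : V} (hγ : IsWeakEventualIdentity γ) (X Y : V) :
    ⁅γ, X * Y⁆ = ⁅γ, X⁆ * Y + X * (⁅(1 : V), γ⁆ * Y + ⁅γ, Y⁆) := by
  rw [lie_mul, hγ _ _]; ring

variable {α : V}

theorem IsWeakEventualIdentity.lieDerivMul_pow (hα : IsWeakEventualIdentity α) (k : ℕ) (X : V) :
    lieDerivMul (α ^ k) X α = k • (α ^ k * ⁅(1 : V), α⁆ * X) := by
  induction k with
  | zero => simp [lieDerivMul_one]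
  | succ k ih =>
    rw [pow_succ', lieDerivMul_mul, ih, hα _ _]
    ring

theorem IsWeakEventualIdentity.lie_pow (hα : IsWeakEventualIdentity α) (k : ℕ) :
    ⁅α, α ^ k⁆ + ⁅(1 : V), α⁆ * α ^ k = k • (⁅(1 : V), α⁆ * α ^ k) := by
  induction k with
  | zero => rw [pow_zero, mul_one, zero_smul, ← lie_skew α, neg_add_cancel]
  | succ k ih =>
    rw [pow_succ', lie_mul, hα _ _, lie_self]
    linear_combination α * ih

theorem IsWeakEventualIdentity.lie_mul_pow_mul_mul {γ : V} (hγ : IsWeakEventualIdentity γ)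
    (hα : IsWeakEventualIdentity α) (n : ℕ) (U : V) :
    ⁅γ * α ^ n, U * α⁆ = α * ⁅γ * α ^ n, U⁆ + α ^ n * U * (⁅(1 : V), γ⁆ * α + ⁅γ, α⁆) := by
  have hWα : ⁅α, γ * α ^ n⁆ = ⁅(1 : V), α⁆ * (γ * α ^ n) + ⁅α, γ⁆ * α ^ n + γ * ⁅α, α ^ n⁆ := by
    rw [lie_mul, hα _ _]
  rw [lie_mul, lieDerivMul_mul, hγ _ _, hα.lieDerivMul_pow, ← lie_skew (γ * α ^ n) α, hWα,
    ← lie_skew γ α]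
  linear_combination (-U * γ) * hα.lie_pow n

theorem IsWeakEventualIdentity.lie_mul_pow_mul_pow_succ {γ₀ : V} (hγ₀ : IsWeakEventualIdentity γ₀)
    (hα : IsWeakEventualIdentity α) (γ₁ : V) (n m : ℕ) :
    ⁅γ₀ * α ^ n, γ₁ * α ^ (m + 1)⁆ =
      α * ⁅γ₀ * α ^ n, γ₁ * α ^ m⁆ + α ^ (n + m) * (⁅γ₀, γ₁ * α⁆ - ⁅γ₀, γ₁⁆ * α) := by
  rw [pow_succ, ← mul_assoc, hγ₀.lie_mul_pow_mul_mul hα, hγ₀.lie_mul_right]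
  ring

theorem IsWeakEventualIdentity.lie_mul_pow_succ_mul_pow {γ₁ : V} (hγ₁ : IsWeakEventualIdentity γ₁)
    (hα : IsWeakEventualIdentity α) (γ₀ : V) (n m : ℕ) :
    ⁅γ₀ * α ^ (n + 1), γ₁ * α ^ m⁆ =
      α * ⁅γ₀ * α ^ n, γ₁ * α ^ m⁆ + α ^ (n + m) * (⁅γ₀ * α, γ₁⁆ - ⁅γ₀, γ₁⁆ * α) := by
  rw [← lie_skew, hγ₁.lie_mul_pow_mul_pow_succ hα, ← lie_skew (γ₁ * α ^ m),
    ← lie_skew γ₁ (γ₀ * α), ← lie_skew γ₁ γ₀, add_comm m n]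
  ring

theorem lie_mul_pow_mul_pow {β₀ β₁ : V} (hβ₀ : IsWeakEventualIdentity β₀)
    (hβ₁ : IsWeakEventualIdentity β₁) (hα : IsWeakEventualIdentity α) (N : ℕ) :
    ∀ n m : ℕ, n + m = N + 1 →
      ⁅β₀ * α ^ n, β₁ * α ^ m⁆ =
        α ^ N * (m • ⁅β₀, β₁ * α⁆ + n • ⁅β₀ * α, β₁⁆) - N • (α ^ (N + 1) * ⁅β₀, β₁⁆) := by
  induction N with
  | zero =>
    intro n m h
    obtain ⟨rfl, rfl⟩ | ⟨rfl, rfl⟩ : n = 0 ∧ m = 1 ∨ n = 1 ∧ m = 0 := by omega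
    all_goals simp
  | succ N ih =>
    rintro n (_ | m) h
    · obtain rfl : n = N + 2 := by omega
      rw [hβ₁.lie_mul_pow_succ_mul_pow hα, ih (N + 1) 0 (by omega)]
      ring
    · rw [hβ₀.lie_mul_pow_mul_pow_succ hα, ih n m (by omega), show n + m = N + 1 by omega]
      ring

end FManifoldAlgebra

open FManifoldAlgebra in
/-- Abstract formalization: on an F-manifold (Hertling–Manin condition for `∘`), if
`β₀, β₁, α` are weak eventual identities then for `n + m ≥ 1`:
`[β₀∘α^n, β₁∘α^m] = α^{n+m−1}∘(m[β₀,β₁∘α] + n[β₀∘α,β₁]) − (n+m−1)α^{n+m}∘[β₀,β₁]`. -/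
theorem stmt10 (V : Type*) [LieRing V]
    (mul : V → V → V) (e : V)
    (hcomm : ∀ X Y, mul X Y = mul Y X)
    (hassoc : ∀ X Y Z, mul (mul X Y) Z = mul X (mul Y Z))
    (hunit : ∀ X, mul e X = X)
    (haddl : ∀ X Y Z, mul (X + Y) Z = mul X Z + mul Y Z)
    (LD : V → V → V → V)
    (hLD : ∀ Z X Y, LD Z X Y = ⁅Z, mul X Y⁆ - mul ⁅Z, X⁆ Y - mul X ⁅Z, Y⁆)
    (hHM : ∀ X Y Z W, LD (mul X Y) Z W = mul X (LD Y Z W) + mul Y (LD X Z W))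
    (α β₀ β₁ : V)
    (hβ₀ : ∀ X Y, LD β₀ X Y = mul ⁅e, β₀⁆ (mul X Y))
    (hβ₁ : ∀ X Y, LD β₁ X Y = mul ⁅e, β₁⁆ (mul X Y))
    (hα : ∀ X Y, LD α X Y = mul ⁅e, α⁆ (mul X Y))
    (apow : ℕ → V) (hpow0 : apow 0 = e) (hpowS : ∀ k, apow (k + 1) = mul α (apow k)) :
    ∀ n m : ℕ, 1 ≤ n + m →
      ⁅mul β₀ (apow n), mul β₁ (apow m)⁆
        = mul (apow (n + m - 1)) (m • ⁅β₀, mul β₁ α⁆ + n • ⁅mul β₀ α, β₁⁆)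
          - (n + m - 1) • mul (apow (n + m)) ⁅β₀, β₁⁆ := by
  have mul_add : ∀ X Y Z, mul X (Y + Z) = mul X Y + mul X Z := fun X Y Z => by
    rw [hcomm, haddl, hcomm Y, hcomm Z]
  have zero_mul : ∀ X, mul 0 X = 0 := fun X => by
    simpa using (haddl 0 0 X).symm
  let _ : FManifoldAlgebra V :=
    { ‹LieRing V› with
      mul := mul, one := e, mul_comm := hcomm, mul_assoc := hassoc, one_mul := hunit,
      mul_one := fun X => (hcomm X e).trans (hunit X),
      right_distrib := haddl, left_distrib := mul_add,
      zero_mul := zero_mul, mul_zero := fun X => (hcomm X 0).trans (zero_mul X),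
      lieDerivMul_mul := fun X Y Z W => by
        have h := hHM X Y Z W
        simp only [hLD] at h
        exact h }
  have weak : ∀ β, (∀ X Y, LD β X Y = mul ⁅e, β⁆ (mul X Y)) → IsWeakEventualIdentity β :=
    fun β h X Y => (hLD β X Y).symm.trans (h X Y)
  obtain rfl : apow = (α ^ ·) := funext fun k => by
    induction k with
    | zero => exact hpow0
    | succ k ih => rw [hpowS, ih, pow_succ']; rfl
  intro n m hnm
  obtain ⟨N, hN⟩ : ∃ N, n + m = N + 1 := ⟨n + m - 1, by omega⟩
  rw [hN, Nat.add_sub_cancel]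
  exact lie_mul_pow_mul_pow (weak β₀ hβ₀) (weak β₁ hβ₁) (weak α hα) N n m hN
end

section
/- Under the recursion of the previous statement, the leading coefficient of v_j satisfies v_j^j = (a₂)^{j−1} / (ℰ^1)^{j−2} for all j ≥ 2; in particular v_j^j ≠ 0 whenever a₂ ≠ 0 and ℰ^1 ≠ 0, and hence v₁, …, v_n are linearly independent over ℝ. -/
/-- Truncated convolution on coefficient sequences indexed by `I ∈ {1,…,n}`
(coefficient `I` stands for the coefficient of `x^{I−1}` in `ℝ[x]/(x^n)`):
`(a·b)^I = ∑_{p+q=I+1} a^p b^q`, and `0` outside the range. -/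
noncomputable def tmul (n : ℕ) (a b : ℤ → ℝ) : ℤ → ℝ := fun I =>
  if 1 ≤ I ∧ I ≤ (n : ℤ) then ∑ s ∈ Finset.Icc 1 I, a s * b (I + 1 - s) else 0

/-- The unit `1` of the truncated algebra. -/
noncomputable def tone : ℤ → ℝ := fun I => if I = 1 then 1 else 0

theorem tmul_apply (n : ℕ) (f g : ℤ → ℝ) (I : ℤ) :
    tmul n f g I =
      if 1 ≤ I ∧ I ≤ (n : ℤ) then ∑ s ∈ Finset.Icc 1 I, f s * g (I + 1 - s) else 0 := rfl



/-- Leading coefficients: with `v_1 = E`, `v_{j+1} = E⁻¹·v_j·v₂`, one has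
`v_j^j = (a₂)^{j−1}/(ℰ^1)^{j−2}` for `2 ≤ j ≤ n`; in particular `v_j^j ≠ 0`, and
`v_1, …, v_n` are linearly independent over ℝ. -/
theorem stmt13 (n : ℕ) (hn : 1 ≤ n)
    (ℰ a Einv : ℤ → ℝ)
    (hℰsupp : ∀ I : ℤ, I < 1 ∨ (n : ℤ) < I → ℰ I = 0)
    (hasupp : ∀ I : ℤ, I < 1 ∨ (n : ℤ) < I → a I = 0)
    (ha1 : a 1 = 0) (hℰ1 : ℰ 1 ≠ 0) (ha2 : a 2 ≠ 0)
    (hinv : tmul n ℰ Einv = tone)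
    (v : ℕ → ℤ → ℝ)
    (hv1 : v 1 = ℰ)
    (hvrec : ∀ j : ℕ, 1 ≤ j → v (j + 1) = tmul n Einv (tmul n (v j) a)) :
    (∀ j : ℕ, 2 ≤ j → (j : ℤ) ≤ (n : ℤ) →
      v j (j : ℤ) = (a 2) ^ (j - 1) / (ℰ 1) ^ (j - 2) ∧ v j (j : ℤ) ≠ 0) ∧
    LinearIndependent ℝ (fun i : Fin n => v ((i : ℕ) + 1)) := by
  -- a vanishes at arguments below 2
  have halow : ∀ t : ℤ, t < 2 → a t = 0 := by
    intro t ht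
    rcases lt_or_ge t 1 with h | h
    · exact hasupp t (Or.inl h)
    · have : t = 1 := by omega
      simpa [this] using ha1
  -- Einv 1 = 1/ℰ1 (in the form ℰ 1 * Einv 1 = 1)
  have hEinv1 : ℰ 1 * Einv 1 = 1 := by
    have h := congrFun hinv 1
    have hn' : (1:ℤ) ≤ (n:ℤ) := by exact_mod_cast hn
    simpa [tmul, tone, hn'] using h
  -- the key induction
  have key : ∀ j : ℕ, 1 ≤ j →
      (∀ I : ℤ, I < (j:ℤ) → v j I = 0) ∧
      ((j:ℤ) ≤ (n:ℤ) → v j (j:ℤ) = ℰ 1 * (a 2 / ℰ 1) ^ (j - 1)) := by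
    intro j hj
    induction j, hj using Nat.le_induction with
    | base =>
      constructor
      · intro I hI
        rw [hv1]
        exact hℰsupp I (Or.inl (by exact_mod_cast hI))
      · intro _
        simp [hv1]
    | succ j hj ih =>
      obtain ⟨ih0, ih1⟩ := ih
      -- the middle product W = v_j * a vanishes at arguments ≤ j
      have hW : ∀ t : ℤ, t ≤ (j:ℤ) → tmul n (v j) a t = 0 := by
        intro t ht
        rw [tmul_apply]
        split
        · apply Finset.sum_eq_zero
          intro s hs
          simp only [Finset.mem_Icc] at hs
          rcases lt_or_ge s (j:ℤ) with h | h
          · rw [ih0 s h, zero_mul]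
          · rw [halow (t + 1 - s) (by omega), mul_zero]
        · rfl
      constructor
      · -- triangularity for j+1
        intro I hI
        rw [hvrec j hj]
        rw [tmul_apply]
        split
        · apply Finset.sum_eq_zero
          intro s hs
          simp only [Finset.mem_Icc] at hs
          rw [hW (I + 1 - s) (by push_cast at hI ⊢; omega), mul_zero]
        · rfl
      · -- the leading coefficient
        intro hjn
        have hjn' : (j:ℤ) ≤ (n:ℤ) := by push_cast at hjn; omega
        rw [hvrec j hj]
        have hmem1 : (1:ℤ) ∈ Finset.Icc (1:ℤ) ((j:ℕ)+1:ℕ) := by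
          simp only [Finset.mem_Icc]
          refine ⟨le_refl 1, ?_⟩; push_cast; omega
        rw [tmul_apply, if_pos (by push_cast at hjn ⊢; omega)]
        rw [Finset.sum_eq_single_of_mem 1 hmem1 (by
          intro s hs hne
          simp only [Finset.mem_Icc] at hs
          rw [hW ((((j:ℕ)+1:ℕ):ℤ) + 1 - s) (by push_cast at hs ⊢; omega), mul_zero])]
        -- inner sum at j+1
        have hWval : tmul n (v j) a ((((j:ℕ)+1:ℕ):ℤ) + 1 - 1) = v j (j:ℤ) * a 2 := by
          rw [tmul_apply, if_pos (by push_cast; omega)]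
          have hmemj : (j:ℤ) ∈ Finset.Icc (1:ℤ) ((((j:ℕ)+1:ℕ):ℤ) + 1 - 1) := by
            simp only [Finset.mem_Icc]; push_cast; omega
          rw [Finset.sum_eq_single_of_mem (j:ℤ) hmemj (by
            intro s hs hne
            simp only [Finset.mem_Icc] at hs
            rcases lt_or_ge s (j:ℤ) with h | h
            · rw [ih0 s h, zero_mul]
            · rw [halow _ (by push_cast at hs ⊢; omega), mul_zero])]
          congr 1
          congr 1
          push_cast; ring
        rw [hWval, ih1 hjn']
        have : ((j:ℕ)+1:ℕ) - 1 = (j - 1) + 1 := by omega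
        rw [this, pow_succ]
        field_simp
        linear_combination hEinv1
  -- diagonal entries are nonzero
  have hdiag : ∀ j : ℕ, 1 ≤ j → (j:ℤ) ≤ (n:ℤ) → v j (j:ℤ) ≠ 0 := by
    intro j hj hjn
    rw [(key j hj).2 hjn]
    exact mul_ne_zero hℰ1 (pow_ne_zero _ (div_ne_zero ha2 hℰ1))
  constructor
  · intro j hj hjn
    have hval := (key j (by omega)).2 hjn
    have hform : v j (j:ℤ) = (a 2) ^ (j - 1) / (ℰ 1) ^ (j - 2) := by
      rw [hval]
      have h1 : j - 1 = (j - 2) + 1 := by omega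
      rw [div_pow, h1, pow_succ]
      field_simp
      ring
    exact ⟨hform, hdiag j (by omega) hjn⟩
  · rw [Fintype.linearIndependent_iff]
    intro g hg
    have hg' : ∀ I : ℤ, (∑ i : Fin n, g i * v (i + 1) I) = 0 := by
      intro I
      have := congrFun hg I
      simpa [Finset.sum_apply] using this
    have H : ∀ k : ℕ, ∀ i : Fin n, (i:ℕ) = k → g i = 0 := by
      intro k
      induction k using Nat.strong_induction_on with
      | _ k IH =>
        intro i hik
        have hsum := hg' ((i:ℕ) + 1 : ℕ)
        have hsingle : ∀ b : Fin n, b ∈ Finset.univ → b ≠ i →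
            g b * v (b + 1) (((i:ℕ) + 1 : ℕ) : ℤ) = 0 := by
          intro b _ hbi
          rcases lt_or_gt_of_ne (fun h : (b:ℕ) = (i:ℕ) => hbi (Fin.ext h)) with h | h
          · rw [IH (b:ℕ) (by omega) b rfl, zero_mul]
          · rw [(key (b + 1) (by omega)).1 (((i:ℕ) + 1 : ℕ) : ℤ)
              (by push_cast; omega), mul_zero]
        rw [Finset.sum_eq_single_of_mem i (Finset.mem_univ i) hsingle] at hsum
        have hne := hdiag ((i:ℕ) + 1) (by omega) (by push_cast; exact_mod_cast i.isLt)
        have : v ((i:ℕ) + 1) ((((i:ℕ) + 1 : ℕ)) : ℤ) ≠ 0 := by exact_mod_cast hne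
        exact (mul_eq_zero.mp hsum).resolve_right this
    intro i
    exact H (i:ℕ) i rfl
end
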